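/- arXiv:2503.23548 — 2 statements merged into one kernel-verified Lean document; each statement's English description precedes it below -/
import Mathlib

section
/- Let A, B be nonempty subsets of a normed space X and T a p-cyclic φ-contraction mapping. For (x₀,y₀) ∈ A × B define x_n = T(x_{n-1}, y_{n-1}) and y_n = T(y_{n-1}, x_{n-1}). Then the sequence of distances ‖(x_{n+1}, y_{n+1}) − (x_n, y_n)‖ is nonincreasing in n. -/
/-!
The pair map `(u, v) ↦ (T u v, T v u)` sends `A × B` to `B × A` and back, and between these two
sets it is nonexpansive for the max norm: since `dist(A, B)` is at most the distance of the
points compared and `φ` is monotone, the `φ`-terms of the contraction inequality cancel in the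
right direction. Consecutive iterates always lie one in each set, so each step distance bounds
the next.
-/

open Filter Topology

/-- `setDist A B = inf {‖a - b‖ : a ∈ A, b ∈ B}`. -/
noncomputable def setDist {X : Type*} [NormedAddCommGroup X] (A B : Set X) : ℝ :=
  sInf {d : ℝ | ∃ a ∈ A, ∃ b ∈ B, d = ‖a - b‖}

open Set

lemma antitone_dist_succ_of_mapsTo_alternating {α : Type*} [PseudoMetricSpace α] {F : α → α}
    {S S' : Set α} (hS : MapsTo F S S') (hS' : MapsTo F S' S)
    (hF : ∀ p ∈ S, ∀ q ∈ S', dist (F p) (F q) ≤ dist p q)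
    {z : ℕ → α} (hz0 : z 0 ∈ S) (hz : ∀ n, z (n + 1) = F (z n)) :
    Antitone fun n => dist (z (n + 1)) (z n) := by
  have hmem : ∀ n, z n ∈ S ∨ z n ∈ S' := by
    intro n
    induction n with
    | zero => exact .inl hz0
    | succ n ih =>
      rw [hz n]
      exact ih.symm.imp (fun h => hS' h) (fun h => hS h)
  refine antitone_nat_of_succ_le fun n => ?_
  rw [hz (n + 1), hz n]
  rcases hmem n with h | h
  · exact (dist_comm _ _).trans_le ((hF _ h _ (hS h)).trans_eq (dist_comm _ _))
  · exact hF _ (hS' h) _ h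

section setDist

variable {X : Type*} [NormedAddCommGroup X] {A B : Set X}

lemma setDist_nonneg : 0 ≤ setDist A B :=
  Real.sInf_nonneg <| by
    rintro d ⟨a, -, b, -, rfl⟩
    exact norm_nonneg _

lemma setDist_le_norm_sub {a b : X} (ha : a ∈ A) (hb : b ∈ B) : setDist A B ≤ ‖a - b‖ :=
  csInf_le ⟨0, fun _ ⟨_, _, _, _, hd⟩ => hd ▸ norm_nonneg _⟩ ⟨a, ha, b, hb, rfl⟩

end setDist

section coupledMap

variable {X : Type*}

def coupledMap (T : X → X → X) (p : X × X) : X × X :=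
  (T p.1 p.2, T p.2 p.1)

variable {A B : Set X} {T : X → X → X}

lemma coupledMap_mapsTo (hTB : ∀ x ∈ A, ∀ y ∈ B, T x y ∈ B)
    (hTA : ∀ x ∈ B, ∀ y ∈ A, T x y ∈ A) : MapsTo (coupledMap T) (A ×ˢ B) (B ×ˢ A) :=
  fun _ ⟨h₁, h₂⟩ => ⟨hTB _ h₁ _ h₂, hTA _ h₂ _ h₁⟩

variable [NormedAddCommGroup X] {φ : ℝ → ℝ} (hφ : MonotoneOn φ (Ici 0))
  (hT : ∀ x₁ ∈ A, ∀ y₁ ∈ B, ∀ x₂ ∈ B, ∀ y₂ ∈ A,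
    ‖T x₁ y₁ - T x₂ y₂‖ ≤ ‖((x₁, y₁) : X × X) - (x₂, y₂)‖
      - φ ‖((x₁, y₁) : X × X) - (x₂, y₂)‖ + φ (setDist A B))
include hφ hT

lemma norm_sub_le_of_cyclicContraction {x₁ y₁ x₂ y₂ : X}
    (hx₁ : x₁ ∈ A) (hy₁ : y₁ ∈ B) (hx₂ : x₂ ∈ B) (hy₂ : y₂ ∈ A) :
    ‖T x₁ y₁ - T x₂ y₂‖ ≤ ‖((x₁, y₁) : X × X) - (x₂, y₂)‖ := by
  set D := ‖((x₁, y₁) : X × X) - (x₂, y₂)‖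
  have hdist : setDist A B ≤ D :=
    (setDist_le_norm_sub hx₁ hx₂).trans (norm_fst_le ((x₁, y₁) - (x₂, y₂)))
  have hφD : φ (setDist A B) ≤ φ D := hφ setDist_nonneg (norm_nonneg _) hdist
  linarith [hT x₁ hx₁ y₁ hy₁ x₂ hx₂ y₂ hy₂]

lemma dist_coupledMap_le (p : X × X) (hp : p ∈ A ×ˢ B) (q : X × X) (hq : q ∈ B ×ˢ A) :
    dist (coupledMap T p) (coupledMap T q) ≤ dist p q := by
  have h₁ := norm_sub_le_of_cyclicContraction hφ hT hp.1 hp.2 hq.1 hq.2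
  have h₂ := norm_sub_le_of_cyclicContraction hφ hT hq.2 hq.1 hp.2 hp.1
  simp only [coupledMap, Prod.norm_def, Prod.fst_sub, Prod.snd_sub, dist_eq_norm] at h₁ h₂ ⊢
  rw [norm_sub_rev (T q.2 q.1), norm_sub_rev q.1, norm_sub_rev q.2, max_comm] at h₂
  exact max_le h₁ h₂

end coupledMap

theorem stmt2_general {X : Type*} [NormedAddCommGroup X]
    (A B : Set X)
    (T : X → X → X) (φ : ℝ → ℝ)
    (hφmono : StrictMonoOn φ (Set.Ici 0))
    (hTB : ∀ x ∈ A, ∀ y ∈ B, T x y ∈ B)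
    (hTA : ∀ x ∈ B, ∀ y ∈ A, T x y ∈ A)
    (hT : ∀ x₁ ∈ A, ∀ y₁ ∈ B, ∀ x₂ ∈ B, ∀ y₂ ∈ A,
      ‖T x₁ y₁ - T x₂ y₂‖ ≤ ‖((x₁, y₁) : X × X) - (x₂, y₂)‖
        - φ ‖((x₁, y₁) : X × X) - (x₂, y₂)‖ + φ (setDist A B))
    (x y : ℕ → X) (hx0 : x 0 ∈ A) (hy0 : y 0 ∈ B)
    (hx : ∀ n, x (n + 1) = T (x n) (y n))
    (hy : ∀ n, y (n + 1) = T (y n) (x n)) :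
    Antitone (fun n : ℕ => ‖((x (n + 1), y (n + 1)) : X × X) - (x n, y n)‖) := by
  have hdist := antitone_dist_succ_of_mapsTo_alternating
    (coupledMap_mapsTo hTB hTA) (coupledMap_mapsTo hTA hTB)
    (dist_coupledMap_le hφmono.monotoneOn hT) (z := fun n => (x n, y n)) ⟨hx0, hy0⟩
    (fun n => by simp only [coupledMap, hx, hy])
  simpa only [dist_eq_norm] using hdist

theorem stmt2 {X : Type*} [NormedAddCommGroup X] [NormedSpace ℝ X]
    (A B : Set X) (hA : A.Nonempty) (hB : B.Nonempty)
    (T : X → X → X) (φ : ℝ → ℝ)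
    (hφmono : StrictMonoOn φ (Set.Ici 0)) (hφpos : ∀ t ≥ (0:ℝ), 0 ≤ φ t)
    (hTB : ∀ x ∈ A, ∀ y ∈ B, T x y ∈ B)
    (hTA : ∀ x ∈ B, ∀ y ∈ A, T x y ∈ A)
    (hT : ∀ x₁ ∈ A, ∀ y₁ ∈ B, ∀ x₂ ∈ B, ∀ y₂ ∈ A,
      ‖T x₁ y₁ - T x₂ y₂‖ ≤ ‖((x₁, y₁) : X × X) - (x₂, y₂)‖
        - φ ‖((x₁, y₁) : X × X) - (x₂, y₂)‖ + φ (setDist A B))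
    (x y : ℕ → X) (hx0 : x 0 ∈ A) (hy0 : y 0 ∈ B)
    (hx : ∀ n, x (n + 1) = T (x n) (y n))
    (hy : ∀ n, y (n + 1) = T (y n) (x n)) :
    Antitone (fun n : ℕ => ‖((x (n + 1), y (n + 1)) : X × X) - (x n, y n)‖) :=
  stmt2_general A B T φ hφmono hTB hTA hT x y hx0 hy0 hx hy
end

section
/- Let A, B be nonempty subsets of a uniformly convex Banach space X with A convex, and T a p-cyclic φ-contraction mapping. Let (x₀,y₀) ∈ A × B, x_n = T(x_{n-1}, y_{n-1}), y_n = T(y_{n-1}, x_{n-1}). Then for each ε > 0 there exists N ∈ ℕ such that for all m > n ≥ N, ‖(x_{2m}, y_{2m}) − (x_{2n+1}, y_{2n+1})‖ < dist(A,B) + ε. -/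
open Filter Topology

set_option maxHeartbeats 2000000 in
theorem stmt6 {X : Type*} [NormedAddCommGroup X] [NormedSpace ℝ X] [UniformConvexSpace X] [CompleteSpace X]
    (A B : Set X) (hA : A.Nonempty) (hB : B.Nonempty)
    (T : X → X → X) (φ : ℝ → ℝ)
    (hφmono : StrictMonoOn φ (Set.Ici 0)) (hφpos : ∀ t ≥ (0:ℝ), 0 ≤ φ t)
    (hTB : ∀ x ∈ A, ∀ y ∈ B, T x y ∈ B)
    (hTA : ∀ x ∈ B, ∀ y ∈ A, T x y ∈ A)
    (hT : ∀ x₁ ∈ A, ∀ y₁ ∈ B, ∀ x₂ ∈ B, ∀ y₂ ∈ A,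
      ‖T x₁ y₁ - T x₂ y₂‖ ≤ ‖((x₁, y₁) : X × X) - (x₂, y₂)‖
        - φ ‖((x₁, y₁) : X × X) - (x₂, y₂)‖ + φ (setDist A B))
    (hAconv : Convex ℝ A)
    (x y : ℕ → X) (hx0 : x 0 ∈ A) (hy0 : y 0 ∈ B)
    (hx : ∀ n, x (n + 1) = T (x n) (y n))
    (hy : ∀ n, y (n + 1) = T (y n) (x n)) :
    ∀ ε > (0:ℝ), ∃ N : ℕ, ∀ m n : ℕ, N ≤ n → n < m →
      ‖((x (2 * m), y (2 * m)) : X × X) - (x (2 * n + 1), y (2 * n + 1))‖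
        < setDist A B + ε := by
  intro ε hε
  set d : ℝ := setDist A B with hd_def
  -- basic facts about d
  have hdle : ∀ a ∈ A, ∀ b ∈ B, d ≤ ‖a - b‖ := by
    intro a ha b hb
    refine csInf_le ⟨0, ?_⟩ ⟨a, ha, b, hb, rfl⟩
    rintro r ⟨a', _, b', _, rfl⟩
    positivity
  have hd0 : 0 ≤ d := by
    apply Real.sInf_nonneg
    rintro r ⟨a', _, b', _, rfl⟩
    positivity
  have φle : ∀ s t : ℝ, 0 ≤ s → s ≤ t → φ s ≤ φ t := by
    intro s t hs hst
    rcases eq_or_lt_of_le hst with rfl | h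
    · exact le_refl _
    · exact (hφmono hs (hs.trans hst) h).le
  -- the interleaved sequences
  set v : ℕ → X := fun k => if k % 2 = 0 then x k else y k with hv_def
  set w : ℕ → X := fun k => if k % 2 = 0 then y k else x k with hw_def
  have hvs : ∀ k, v (k + 1) = T (w k) (v k) := by
    intro k
    rcases Nat.mod_two_eq_zero_or_one k with h | h
    · have h1 : (k + 1) % 2 = 1 := by omega
      simp only [hv_def, hw_def, h, h1]
      norm_num [hy k]
    · have h1 : (k + 1) % 2 = 0 := by omega
      simp only [hv_def, hw_def, h, h1]
      norm_num [hx k]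
  have hws : ∀ k, w (k + 1) = T (v k) (w k) := by
    intro k
    rcases Nat.mod_two_eq_zero_or_one k with h | h
    · have h1 : (k + 1) % 2 = 1 := by omega
      simp only [hv_def, hw_def, h, h1]
      norm_num [hx k]
    · have h1 : (k + 1) % 2 = 0 := by omega
      simp only [hv_def, hw_def, h, h1]
      norm_num [hy k]
  have hmem : ∀ k, v k ∈ A ∧ w k ∈ B := by
    intro k
    induction k with
    | zero =>
      constructor
      · simpa [hv_def] using hx0
      · simpa [hw_def] using hy0
    | succ k ih =>
      rw [hvs k, hws k]
      exact ⟨hTA _ ih.2 _ ih.1, hTB _ ih.1 _ ih.2⟩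
  -- the key two-index quantity
  set Mf : ℕ → ℕ → ℝ := fun a b => max ‖v a - w b‖ ‖w a - v b‖ with hMf_def
  have hMd : ∀ a b, d ≤ Mf a b :=
    fun a b => le_trans (hdle _ (hmem a).1 _ (hmem b).2) (le_max_left _ _)
  -- the contraction property
  have hC : ∀ a b, Mf (a + 1) (b + 1) ≤ Mf a b - φ (Mf a b) + φ d := by
    intro a b
    have h1 : ‖v (a + 1) - w (b + 1)‖ ≤ Mf a b - φ (Mf a b) + φ d := by
      rw [hvs a, hws b, norm_sub_rev]
      have h := hT (v b) (hmem b).1 (w b) (hmem b).2 (w a) (hmem a).2 (v a) (hmem a).1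
      have hnorm : ‖((v b, w b) : X × X) - (w a, v a)‖ = Mf a b := by
        simp only [Prod.norm_def, Prod.fst_sub, Prod.snd_sub, hMf_def]
        rw [norm_sub_rev (v b) (w a), norm_sub_rev (w b) (v a), max_comm]
      rw [hnorm] at h
      exact h
    have h2 : ‖w (a + 1) - v (b + 1)‖ ≤ Mf a b - φ (Mf a b) + φ d := by
      rw [hvs b, hws a]
      have h := hT (v a) (hmem a).1 (w a) (hmem a).2 (w b) (hmem b).2 (v b) (hmem b).1
      have hnorm : ‖((v a, w a) : X × X) - (w b, v b)‖ = Mf a b := by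
        simp only [Prod.norm_def, Prod.fst_sub, Prod.snd_sub, hMf_def]
      rw [hnorm] at h
      exact h
    exact max_le h1 h2
  -- drop lemma
  have hDL : ∀ θ : ℝ, d ≤ θ → ∀ a b r : ℕ,
      Mf (a + r) (b + r) ≤ max θ (Mf a b - r * (φ θ - φ d)) := by
    intro θ hθ a b r
    induction r with
    | zero => simpa using le_max_right θ (Mf a b)
    | succ r ih =>
      have hstep : Mf (a + (r + 1)) (b + (r + 1)) ≤
          Mf (a + r) (b + r) - φ (Mf (a + r) (b + r)) + φ d := by
        have := hC (a + r) (b + r)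
        have e1 : a + (r + 1) = a + r + 1 := by omega
        have e2 : b + (r + 1) = b + r + 1 := by omega
        rw [e1, e2]
        exact this
      have hcd : d ≤ Mf (a + r) (b + r) := hMd _ _
      have hc0 : 0 ≤ φ θ - φ d := by
        have := φle d θ hd0 hθ; linarith
      rcases le_or_gt (Mf (a + r) (b + r)) θ with h | h
      · have hφcur : φ d ≤ φ (Mf (a + r) (b + r)) := φle d _ hd0 hcd
        have : Mf (a + (r + 1)) (b + (r + 1)) ≤ θ := by linarith
        exact le_max_of_le_left this
      · have hφθ : φ θ ≤ φ (Mf (a + r) (b + r)) := φle θ _ (hd0.trans hθ) h.le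
        have h1 : Mf (a + (r + 1)) (b + (r + 1)) ≤ Mf (a + r) (b + r) - (φ θ - φ d) := by
          linarith
        have h2 : Mf (a + r) (b + r) ≤ max θ (Mf a b - r * (φ θ - φ d)) := ih
        rcases le_total θ (Mf a b - r * (φ θ - φ d)) with hm | hm
        · rw [max_eq_right hm] at h2
          have : Mf (a + (r + 1)) (b + (r + 1)) ≤ Mf a b - (r + 1) * (φ θ - φ d) := by
            push_cast
            linarith
          refine le_max_of_le_right ?_
          rw [Nat.cast_add, Nat.cast_one]
          exact this
        · rw [max_eq_left hm] at h2
          exact le_max_of_le_left (by linarith)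
  -- antitonicity along the diagonal
  have hAC : ∀ a b r : ℕ, Mf (a + r) (b + r) ≤ Mf a b := by
    intro a b r
    have h := hDL (Mf a b) (hMd a b) a b r
    have hc0 : 0 ≤ φ (Mf a b) - φ d := by
      have := φle d (Mf a b) hd0 (hMd a b); linarith
    have hr0 : (0:ℝ) ≤ (r : ℝ) := Nat.cast_nonneg r
    have : Mf a b - r * (φ (Mf a b) - φ d) ≤ Mf a b := by nlinarith
    calc Mf (a + r) (b + r) ≤ max (Mf a b) (Mf a b - r * (φ (Mf a b) - φ d)) := h
      _ ≤ Mf a b := max_le (le_refl _) this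

  -- e-bounds: consecutive cross distances
  set e0 : ℝ := Mf 1 0 with he0_def
  have he0 : ∀ k, Mf (k + 1) k ≤ e0 := by
    intro k
    have := hAC 1 0 k
    have e1 : 1 + k = k + 1 := by omega
    have e2 : 0 + k = k := by omega
    rwa [e1, e2] at this
  have he00 : 0 ≤ e0 := le_trans hd0 (hMd 1 0)
  -- component bounds
  have hcomp1 : ∀ k, ‖v (k + 1) - w k‖ ≤ Mf (k + 1) k := fun k => le_max_left _ _
  have hcomp2 : ∀ k, ‖v k - w (k + 1)‖ ≤ Mf (k + 1) k := by
    intro k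
    rw [norm_sub_rev]
    exact le_max_right _ _
  -- e converges to d (quantitative)
  have heγ : ∀ γ : ℝ, 0 < γ → ∃ K : ℕ, ∀ k, K ≤ k → Mf (k + 1) k ≤ d + γ := by
    intro γ hγ
    have hcγ : 0 < φ (d + γ) - φ d := by
      have := hφmono (Set.mem_Ici.mpr hd0) (Set.mem_Ici.mpr (by linarith : (0:ℝ) ≤ d + γ))
        (by linarith : d < d + γ)
      linarith
    refine ⟨Nat.ceil (e0 / (φ (d + γ) - φ d)), fun k hk => ?_⟩
    have h := hDL (d + γ) (by linarith) 1 0 k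
    have e1 : 1 + k = k + 1 := by omega
    have e2 : 0 + k = k := by omega
    rw [e1, e2] at h
    have hkc : e0 ≤ (k : ℝ) * (φ (d + γ) - φ d) := by
      have h1 : e0 / (φ (d + γ) - φ d) ≤ (Nat.ceil (e0 / (φ (d + γ) - φ d)) : ℝ) :=
        Nat.le_ceil _
      have h2 : ((Nat.ceil (e0 / (φ (d + γ) - φ d)) : ℕ) : ℝ) ≤ (k : ℝ) :=
        Nat.cast_le.mpr hk
      calc e0 = (e0 / (φ (d + γ) - φ d)) * (φ (d + γ) - φ d) := by field_simp
        _ ≤ (k : ℝ) * (φ (d + γ) - φ d) := by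
            apply mul_le_mul_of_nonneg_right (h1.trans h2) hcγ.le
    calc Mf (k + 1) k ≤ max (d + γ) (Mf 1 0 - k * (φ (d + γ) - φ d)) := h
      _ ≤ d + γ := by
          apply max_le (le_refl _)
          have : Mf 1 0 - (k:ℝ) * (φ (d + γ) - φ d) ≤ 0 := by rw [← he0_def]; linarith
          linarith
  -- t-lemma : A-side double steps tend to 0
  have hTL : ∀ τ : ℝ, 0 < τ → ∃ J : ℕ, ∀ k, J ≤ k → ‖v k - v (k + 2)‖ ≤ τ := by
    intro τ hτ
    rcases eq_or_lt_of_le hd0 with hd | hdpos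
    · -- d = 0
      obtain ⟨K, hK⟩ := heγ (τ / 2) (by linarith)
      refine ⟨K, fun k hk => ?_⟩
      have h1 : ‖v k - w (k + 1)‖ ≤ d + τ / 2 := (hcomp2 k).trans (hK k hk)
      have h2 : ‖v (k + 2) - w (k + 1)‖ ≤ d + τ / 2 := (hcomp1 (k + 1)).trans (hK (k + 1) (by omega))
      calc ‖v k - v (k + 2)‖ ≤ ‖v k - w (k + 1)‖ + ‖w (k + 1) - v (k + 2)‖ :=
            norm_sub_le_norm_sub_add_norm_sub _ _ _
        _ = ‖v k - w (k + 1)‖ + ‖v (k + 2) - w (k + 1)‖ := by rw [norm_sub_rev (w (k+1))]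
        _ ≤ (d + τ / 2) + (d + τ / 2) := by linarith
        _ = τ := by rw [← hd]; ring
    · -- d > 0 : use uniform convexity
      obtain ⟨δu, hδu, hUC⟩ := exists_forall_closed_ball_dist_add_le_two_sub X
        (div_pos hτ (by linarith : (0:ℝ) < d + 1))
      set εu : ℝ := τ / (d + 1) with hεu_def
      set γ : ℝ := min 1 (δu * d / 4) with hγ_def
      have hγpos : 0 < γ := lt_min one_pos (by positivity)
      have hγ1 : γ ≤ 1 := min_le_left _ _
      have hγd : γ ≤ δu * d / 4 := min_le_right _ _
      obtain ⟨K, hK⟩ := heγ γ hγpos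
      refine ⟨K, fun k hk => ?_⟩
      set r : ℝ := d + γ with hr_def
      have hrpos : 0 < r := by simp only [hr_def]; linarith
      have h1 : ‖v k - w (k + 1)‖ ≤ r := (hcomp2 k).trans (hK k hk)
      have h2 : ‖v (k + 2) - w (k + 1)‖ ≤ r := (hcomp1 (k + 1)).trans (hK (k + 1) (by omega))
      by_contra hcon
      push_neg at hcon
      -- scaled points
      set p : X := r⁻¹ • (v k - w (k + 1)) with hp_def
      set q : X := r⁻¹ • (v (k + 2) - w (k + 1)) with hq_def
      have hpn : ‖p‖ ≤ 1 := by
        rw [hp_def, norm_smul, norm_inv, Real.norm_of_nonneg hrpos.le]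
        rw [inv_mul_le_iff₀ hrpos, mul_one]
        exact h1
      have hqn : ‖q‖ ≤ 1 := by
        rw [hq_def, norm_smul, norm_inv, Real.norm_of_nonneg hrpos.le]
        rw [inv_mul_le_iff₀ hrpos, mul_one]
        exact h2
      have hpq : εu ≤ ‖p - q‖ := by
        rw [hp_def, hq_def, ← smul_sub, norm_smul, norm_inv, Real.norm_of_nonneg hrpos.le]
        have : v k - w (k + 1) - (v (k + 2) - w (k + 1)) = v k - v (k + 2) := by abel
        rw [this]
        rw [le_inv_mul_iff₀ hrpos]
        calc r * εu ≤ (d + 1) * εu := by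
              apply mul_le_mul_of_nonneg_right _ (by positivity)
              simp only [hr_def]; linarith
          _ = τ := by rw [hεu_def]; field_simp
          _ ≤ ‖v k - v (k + 2)‖ := hcon.le
      have hsum := hUC hpn hqn hpq
      -- but the midpoint is in A, so ‖p + q‖ is large
      have hmid : (2⁻¹ : ℝ) • (v k + v (k + 2)) ∈ A := by
        have := hAconv (hmem k).1 (hmem (k + 2)).1
          (by norm_num : (0:ℝ) ≤ (2⁻¹:ℝ)) (by norm_num : (0:ℝ) ≤ (2⁻¹:ℝ)) (by norm_num)
        simpa [smul_add] using this
      have hmd : d ≤ ‖(2⁻¹ : ℝ) • (v k + v (k + 2)) - w (k + 1)‖ :=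
        hdle _ hmid _ (hmem (k + 1)).2
      have hpq_eq : p + q = r⁻¹ • ((2:ℝ) • ((2⁻¹ : ℝ) • (v k + v (k + 2)) - w (k + 1))) := by
        rw [hp_def, hq_def, ← smul_add]
        congr 1
        module
      have hsum2 : ‖p + q‖ = r⁻¹ * (2 * ‖(2⁻¹ : ℝ) • (v k + v (k + 2)) - w (k + 1)‖) := by
        rw [hpq_eq, norm_smul, norm_smul, norm_inv, Real.norm_of_nonneg hrpos.le]
        norm_num
      have hbig : 2 * d / r ≤ ‖p + q‖ := by
        rw [hsum2, div_le_iff₀ hrpos]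
        have hrinv : 0 < r⁻¹ := inv_pos.mpr hrpos
        calc 2 * d ≤ 2 * ‖(2⁻¹ : ℝ) • (v k + v (k + 2)) - w (k + 1)‖ := by linarith
          _ = r⁻¹ * (2 * ‖(2⁻¹ : ℝ) • (v k + v (k + 2)) - w (k + 1)‖) * r := by field_simp
      have hlt : 2 - δu < 2 * d / r := by
        rw [lt_div_iff₀ hrpos]
        have hδu2 : δu * γ ≥ 0 := by positivity
        simp only [hr_def]
        nlinarith
      linarith

  -- constants for the boundedness argument
  have hc1 : 0 < φ (d + 1) - φ d := by
    have := hφmono (Set.mem_Ici.mpr hd0) (Set.mem_Ici.mpr (by linarith : (0:ℝ) ≤ d + 1))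
      (by linarith : d < d + 1)
    linarith
  set c : ℝ := φ (d + 1) - φ d with hc_def
  set τ : ℝ := c / 2 with hτ_def
  have hτpos : 0 < τ := by rw [hτ_def]; linarith
  obtain ⟨J₀, hJ₀⟩ := hTL τ hτpos
  set Yf : ℕ → ℕ → ℝ := fun k j => ‖v (j + 2 * k) - v j‖ with hYf_def
  have hYf : ∀ k j, Yf k j = ‖v (j + 2 * k) - v j‖ := fun _ _ => rfl
  have ht2 : ∀ j, ‖v j - v (j + 2)‖ ≤ 2 * e0 := by
    intro j
    have h1 : ‖v j - w (j + 1)‖ ≤ e0 := (hcomp2 j).trans (he0 j)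
    have h2 : ‖v (j + 2) - w (j + 1)‖ ≤ e0 := by
      have := (hcomp1 (j + 1)).trans (he0 (j + 1))
      have e : j + 1 + 1 = j + 2 := by omega
      rwa [e] at this
    calc ‖v j - v (j + 2)‖ ≤ ‖v j - w (j + 1)‖ + ‖w (j + 1) - v (j + 2)‖ :=
          norm_sub_le_norm_sub_add_norm_sub _ _ _
      _ = ‖v j - w (j + 1)‖ + ‖v (j + 2) - w (j + 1)‖ := by rw [norm_sub_rev (w (j + 1))]
      _ ≤ 2 * e0 := by linarith
  have hYcrude : ∀ k j, Yf k j ≤ (k : ℝ) * (2 * e0) := by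
    intro k
    induction k with
    | zero => intro j; rw [hYf]; simp
    | succ k ih =>
      intro j
      have tri : ‖v (j + 2 * (k + 1)) - v j‖ ≤
          ‖v (j + 2 * (k + 1)) - v (j + 2)‖ + ‖v (j + 2) - v j‖ :=
        norm_sub_le_norm_sub_add_norm_sub _ _ _
      have h1 : ‖v (j + 2 * (k + 1)) - v (j + 2)‖ ≤ (k : ℝ) * (2 * e0) := by
        have := ih (j + 2)
        rw [hYf] at this
        have e : j + 2 + 2 * k = j + 2 * (k + 1) := by omega
        rwa [e] at this
      have h2 : ‖v (j + 2) - v j‖ ≤ 2 * e0 := by rw [norm_sub_rev]; exact ht2 j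
      rw [hYf]
      push_cast
      nlinarith [he00]
  have hBW : ∀ q s j, J₀ ≤ j → Yf q j ≤ Yf q (j + 2 * s) + 2 * (s : ℝ) * τ := by
    intro q s
    induction s with
    | zero => intro j hj; simp
    | succ s ih =>
      intro j hj
      have t1 : ‖v j - v (j + 2)‖ ≤ τ := hJ₀ j hj
      have t2 : ‖v (j + 2 * q) - v (j + 2 * q + 2)‖ ≤ τ := hJ₀ (j + 2 * q) (by omega)
      have step : Yf q j ≤ Yf q (j + 2) + 2 * τ := by
        rw [hYf, hYf]
        have tri1 : ‖v (j + 2 * q) - v j‖ ≤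
            ‖v (j + 2 * q) - v (j + 2)‖ + ‖v (j + 2) - v j‖ :=
          norm_sub_le_norm_sub_add_norm_sub _ _ _
        have tri2 : ‖v (j + 2 * q) - v (j + 2)‖ ≤
            ‖v (j + 2 * q) - v (j + 2 * q + 2)‖ + ‖v (j + 2 * q + 2) - v (j + 2)‖ :=
          norm_sub_le_norm_sub_add_norm_sub _ _ _
        have e : j + 2 * q + 2 = j + 2 + 2 * q := by omega
        rw [e] at tri2
        have h2 : ‖v (j + 2) - v j‖ ≤ τ := by rw [norm_sub_rev]; exact t1
        have h3 : ‖v (j + 2 * q) - v (j + 2 + 2 * q)‖ ≤ τ := by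
          have e2 : j + 2 + 2 * q = j + 2 * q + 2 := by omega
          rw [e2]; exact t2
        linarith
      have ihs := ih (j + 2) (by omega)
      have e : j + 2 + 2 * s = j + 2 * (s + 1) := by omega
      rw [e] at ihs
      push_cast
      push_cast at ihs
      linarith
  set A₂ : ℝ := (d + 1) + 2 * e0 + c with hA2_def
  set Cb : ℝ := 2 * A₂ with hCb_def
  have hCb0 : 0 ≤ Cb := by rw [hCb_def, hA2_def]; linarith
  have hMC : ∀ k j, J₀ ≤ j → Yf k j ≤ Cb := by
    intro k
    induction k with
    | zero => intro j hj; rw [hYf]; simpa using hCb0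
    | succ k ih =>
      have hSne : (Set.range fun i : ℕ => Yf (k + 1) (J₀ + i)).Nonempty := ⟨_, ⟨0, rfl⟩⟩
      have hSbdd : BddAbove (Set.range fun i : ℕ => Yf (k + 1) (J₀ + i)) := by
        refine ⟨((k : ℝ) + 1) * (2 * e0), ?_⟩
        rintro rr ⟨i, rfl⟩
        have := hYcrude (k + 1) (J₀ + i)
        push_cast at this
        linarith
      set Ybar : ℝ := sSup (Set.range fun i : ℕ => Yf (k + 1) (J₀ + i)) with hYbar_def
      have hle_bar : ∀ j, J₀ ≤ j → Yf (k + 1) j ≤ Ybar := by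
        intro j hj
        apply le_csSup hSbdd
        have e : J₀ + (j - J₀) = j := by omega
        refine ⟨j - J₀, ?_⟩
        show Yf (k + 1) (J₀ + (j - J₀)) = Yf (k + 1) j
        rw [e]
      have hmaster : ∀ j, J₀ ≤ j → Yf (k + 1) j ≤ A₂ + max Cb Ybar / 2 := by
        intro j hj
        have hβle : Mf (j + (2 * k + 2)) (j + 1) ≤ e0 + max Cb Ybar := by
          apply max_le
          · have tri : ‖v (j + (2 * k + 2)) - w (j + 1)‖ ≤
                ‖v (j + (2 * k + 2)) - v (j + 2)‖ + ‖v (j + 2) - w (j + 1)‖ :=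
              norm_sub_le_norm_sub_add_norm_sub _ _ _
            have h1 : ‖v (j + (2 * k + 2)) - v (j + 2)‖ ≤ Cb := by
              have := ih (j + 2) (by omega)
              rw [hYf] at this
              have e : j + 2 + 2 * k = j + (2 * k + 2) := by omega
              rwa [e] at this
            have h2 : ‖v (j + 2) - w (j + 1)‖ ≤ e0 := by
              have := (hcomp1 (j + 1)).trans (he0 (j + 1))
              have e : j + 1 + 1 = j + 2 := by omega
              rwa [e] at this
            have : Cb ≤ max Cb Ybar := le_max_left _ _
            linarith
          · have tri : ‖w (j + (2 * k + 2)) - v (j + 1)‖ ≤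
                ‖w (j + (2 * k + 2)) - v (j + (2 * k + 2) + 1)‖ +
                  ‖v (j + (2 * k + 2) + 1) - v (j + 1)‖ :=
              norm_sub_le_norm_sub_add_norm_sub _ _ _
            have h1 : ‖w (j + (2 * k + 2)) - v (j + (2 * k + 2) + 1)‖ ≤ e0 := by
              rw [norm_sub_rev]
              exact (hcomp1 (j + (2 * k + 2))).trans (he0 _)
            have h2 : ‖v (j + (2 * k + 2) + 1) - v (j + 1)‖ ≤ Ybar := by
              have := hle_bar (j + 1) (by omega)
              rw [hYf] at this
              have e : j + 1 + 2 * (k + 1) = j + (2 * k + 2) + 1 := by omega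
              rwa [e] at this
            have : Ybar ≤ max Cb Ybar := le_max_right _ _
            linarith
        have hβs0 : 0 ≤ e0 + max Cb Ybar :=
          add_nonneg he00 (hCb0.trans (le_max_left _ _))
        set R : ℕ := Nat.ceil ((e0 + max Cb Ybar) / c) with hR_def
        have hRc : e0 + max Cb Ybar ≤ (R : ℝ) * c := by
          have h1 : (e0 + max Cb Ybar) / c ≤ (R : ℝ) := Nat.le_ceil _
          calc e0 + max Cb Ybar = ((e0 + max Cb Ybar) / c) * c := by field_simp
            _ ≤ (R : ℝ) * c := mul_le_mul_of_nonneg_right h1 hc1.le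
        have hdrop : Mf (j + (2 * k + 2) + R) (j + 1 + R) ≤ d + 1 := by
          have h := hDL (d + 1) (by linarith) (j + (2 * k + 2)) (j + 1) R
          refine h.trans (max_le (le_refl _) ?_)
          have : Mf (j + (2 * k + 2)) (j + 1) - (R : ℝ) * c ≤ 0 := by linarith
          rw [← hc_def]
          linarith
        obtain ⟨s, hs1, hs2⟩ : ∃ s : ℕ, R ≤ 2 * s ∧ 2 * s ≤ R + 1 :=
          ⟨(R + 1) / 2, by omega, by omega⟩
        have hdrop2 : Mf (j + (2 * k + 2) + 2 * s) (j + 1 + 2 * s) ≤ d + 1 := by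
          have h := hAC (j + (2 * k + 2) + R) (j + 1 + R) (2 * s - R)
          have e1 : j + (2 * k + 2) + R + (2 * s - R) = j + (2 * k + 2) + 2 * s := by omega
          have e2 : j + 1 + R + (2 * s - R) = j + 1 + 2 * s := by omega
          rw [e1, e2] at h
          exact h.trans hdrop
        have htail : Yf (k + 1) (j + 2 * s) ≤ (d + 1) + e0 := by
          rw [hYf]
          have tri : ‖v (j + 2 * s + 2 * (k + 1)) - v (j + 2 * s)‖ ≤
              ‖v (j + 2 * s + 2 * (k + 1)) - w (j + 2 * s + 1)‖ +
                ‖w (j + 2 * s + 1) - v (j + 2 * s)‖ :=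
            norm_sub_le_norm_sub_add_norm_sub _ _ _
          have h1 : ‖v (j + 2 * s + 2 * (k + 1)) - w (j + 2 * s + 1)‖ ≤ d + 1 := by
            have := (le_max_left ‖v (j + (2 * k + 2) + 2 * s) - w (j + 1 + 2 * s)‖
              ‖w (j + (2 * k + 2) + 2 * s) - v (j + 1 + 2 * s)‖).trans hdrop2
            have e1 : j + (2 * k + 2) + 2 * s = j + 2 * s + 2 * (k + 1) := by omega
            have e2 : j + 1 + 2 * s = j + 2 * s + 1 := by omega
            rwa [e1, e2] at this
          have h2 : ‖w (j + 2 * s + 1) - v (j + 2 * s)‖ ≤ e0 := by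
            exact (le_max_right _ _).trans (he0 (j + 2 * s))
          linarith
        have hbw := hBW (k + 1) s j hj
        have hs2' : 2 * (s : ℝ) ≤ (R : ℝ) + 1 := by exact_mod_cast hs2
        have hRle : (R : ℝ) ≤ (e0 + max Cb Ybar) / c + 1 := by
          rw [hR_def]
          exact (Nat.ceil_lt_add_one (div_nonneg hβs0 hc1.le)).le
        have harith : ((e0 + max Cb Ybar) / c + 2) * τ = (e0 + max Cb Ybar) / 2 + c := by
          rw [hτ_def]
          field_simp
        have hmax0 : 0 ≤ max Cb Ybar := hCb0.trans (le_max_left _ _)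
        calc Yf (k + 1) j ≤ Yf (k + 1) (j + 2 * s) + 2 * (s : ℝ) * τ := hbw
          _ ≤ (d + 1) + e0 + ((R : ℝ) + 1) * τ := by nlinarith
          _ ≤ (d + 1) + e0 + ((e0 + max Cb Ybar) / c + 2) * τ := by nlinarith
          _ = (d + 1) + e0 + e0 / 2 + max Cb Ybar / 2 + c := by rw [harith]; ring
          _ ≤ A₂ + max Cb Ybar / 2 := by rw [hA2_def]; linarith
      have hYbar_le : Ybar ≤ A₂ + max Cb Ybar / 2 := by
        apply csSup_le hSne
        rintro rr ⟨i, rfl⟩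
        exact hmaster (J₀ + i) (by omega)
      have hfinal : Ybar ≤ Cb := by
        rcases le_or_gt Ybar Cb with h | h
        · exact h
        · exfalso
          rw [max_eq_right h.le] at hYbar_le
          rw [hCb_def] at h
          linarith
      intro j hj
      exact (hle_bar j hj).trans hfinal
  -- uniform bound for odd-gap cross distances
  have hODD : ∀ p j, J₀ ≤ j → Mf (j + (2 * p + 1)) j ≤ Cb + e0 := by
    intro p j hj
    apply max_le
    · have tri : ‖v (j + (2 * p + 1)) - w j‖ ≤
          ‖v (j + (2 * p + 1)) - v (j + 1)‖ + ‖v (j + 1) - w j‖ :=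
        norm_sub_le_norm_sub_add_norm_sub _ _ _
      have h1 : ‖v (j + (2 * p + 1)) - v (j + 1)‖ ≤ Cb := by
        have := hMC p (j + 1) (by omega)
        rw [hYf] at this
        have e : j + 1 + 2 * p = j + (2 * p + 1) := by omega
        rwa [e] at this
      have h2 : ‖v (j + 1) - w j‖ ≤ e0 := (hcomp1 j).trans (he0 j)
      linarith
    · have tri : ‖w (j + (2 * p + 1)) - v j‖ ≤
          ‖w (j + (2 * p + 1)) - v (j + (2 * p + 1) + 1)‖ +
            ‖v (j + (2 * p + 1) + 1) - v j‖ :=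
        norm_sub_le_norm_sub_add_norm_sub _ _ _
      have h1 : ‖w (j + (2 * p + 1)) - v (j + (2 * p + 1) + 1)‖ ≤ e0 := by
        rw [norm_sub_rev]
        exact (hcomp1 _).trans (he0 _)
      have h2 : ‖v (j + (2 * p + 1) + 1) - v j‖ ≤ Cb := by
        have := hMC (p + 1) j hj
        rw [hYf] at this
        have e : j + 2 * (p + 1) = j + (2 * p + 1) + 1 := by omega
        rwa [e] at this
      linarith
  -- final assembly
  have hc2 : 0 < φ (d + ε / 2) - φ d := by
    have := hφmono (Set.mem_Ici.mpr hd0) (Set.mem_Ici.mpr (by linarith : (0:ℝ) ≤ d + ε / 2))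
      (by linarith : d < d + ε / 2)
    linarith
  have hR10 : 0 ≤ Cb + e0 := add_nonneg hCb0 he00
  set rr : ℕ := Nat.ceil ((Cb + e0) / (φ (d + ε / 2) - φ d)) with hrr_def
  refine ⟨J₀ + rr, fun m n hn hmn => ?_⟩
  have hgoal_eq : ‖((x (2 * m), y (2 * m)) : X × X) - (x (2 * n + 1), y (2 * n + 1))‖
      = Mf (2 * m) (2 * n + 1) := by
    have hv2m : v (2 * m) = x (2 * m) := by
      show (if (2 * m) % 2 = 0 then x (2 * m) else y (2 * m)) = x (2 * m)
      rw [if_pos (by omega)]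
    have hw2m : w (2 * m) = y (2 * m) := by
      show (if (2 * m) % 2 = 0 then y (2 * m) else x (2 * m)) = y (2 * m)
      rw [if_pos (by omega)]
    have hv2n : v (2 * n + 1) = y (2 * n + 1) := by
      show (if (2 * n + 1) % 2 = 0 then x (2 * n + 1) else y (2 * n + 1)) = y (2 * n + 1)
      rw [if_neg (by omega)]
    have hw2n : w (2 * n + 1) = x (2 * n + 1) := by
      show (if (2 * n + 1) % 2 = 0 then y (2 * n + 1) else x (2 * n + 1)) = x (2 * n + 1)
      rw [if_neg (by omega)]
    simp only [Prod.norm_def, Prod.fst_sub, Prod.snd_sub, hMf_def, hv2m, hw2m, hv2n, hw2n]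
  rw [hgoal_eq]
  have hrrc : Cb + e0 ≤ (rr : ℝ) * (φ (d + ε / 2) - φ d) := by
    have h1 : (Cb + e0) / (φ (d + ε / 2) - φ d) ≤ (rr : ℝ) := Nat.le_ceil _
    calc Cb + e0 = ((Cb + e0) / (φ (d + ε / 2) - φ d)) * (φ (d + ε / 2) - φ d) :=
          (div_mul_cancel₀ _ hc2.ne').symm
      _ ≤ (rr : ℝ) * (φ (d + ε / 2) - φ d) := mul_le_mul_of_nonneg_right h1 hc2.le
  have hb'J : J₀ ≤ 2 * n + 1 - rr := by omega
  have hbase := hODD (m - n - 1) (2 * n + 1 - rr) hb'J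
  have h := hDL (d + ε / 2) (by linarith) (2 * n + 1 - rr + (2 * (m - n - 1) + 1))
    (2 * n + 1 - rr) rr
  have e1 : 2 * n + 1 - rr + (2 * (m - n - 1) + 1) + rr = 2 * m := by omega
  have e2 : 2 * n + 1 - rr + rr = 2 * n + 1 := by omega
  rw [e1, e2] at h
  have hle : Mf (2 * m) (2 * n + 1) ≤ d + ε / 2 := by
    refine h.trans (max_le (le_refl _) ?_)
    have : Mf (2 * n + 1 - rr + (2 * (m - n - 1) + 1)) (2 * n + 1 - rr) -
        (rr : ℝ) * (φ (d + ε / 2) - φ d) ≤ 0 := by linarith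
    linarith
  linarith
end
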